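/- arXiv:2304.00278 — 7 statements merged into one kernel-verified Lean document; each statement's English description precedes it below -/
import Mathlib

section
/- Given a well order (α, ⪯), a bijection o : Q → α, and a reflexive relation R on Q, define p <_Q q by recursion on o(p): p <_Q q iff o(p) ≺ o(q), p R q, and for all r, r <_Q p implies r <_Q q. Then <_Q is a well-founded strict partial order (irreflexive and transitive) whose reflexive closure ≤_Q is contained in R. -/
/-- `s` is a finite initial segment of the infinite set `X ⊆ ℕ`. -/
def IsInitSeg (s : Finset ℕ) (X : Set ℕ) : Prop :=
  ↑s ⊆ X ∧ ∀ x ∈ X, x ∉ s → ∀ y ∈ s, y < x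

/-- `s ⊑ t`: `s` is an initial segment of the finite set `t` (possibly `s = t`). -/
def FinInitSeg (s t : Finset ℕ) : Prop :=
  s ⊆ t ∧ ∀ x ∈ t, x ∉ s → ∀ y ∈ s, y < x

/-- `X⁻`: remove the least element of `X`. -/
def minus (X : Set ℕ) : Set ℕ := X \ {sInf X}

/-- `[V]^ω`: infinite subsets of `V`. -/
def InfSub (V : Set ℕ) : Set (Set ℕ) := {X | X ⊆ V ∧ X.Infinite}

/-- Continuity of `f` on `[V]^ω`. -/
def ContOn {Q : Type*} (V : Set ℕ) (f : Set ℕ → Q) : Prop :=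
  ∀ X ∈ InfSub V, ∃ s : Finset ℕ, IsInitSeg s X ∧
    ∀ Y ∈ InfSub V, IsInitSeg s Y → f Y = f X

/-- `f` is `R`-bad on `[V]^ω`. -/
def BadOn {Q : Type*} (R : Q → Q → Prop) (V : Set ℕ) (f : Set ℕ → Q) : Prop :=
  ¬ ∃ X ∈ InfSub V, R (f X) (f (minus X))

/-- The base `∪B` of a set of finite sets. -/
def blockBase (B : Set (Finset ℕ)) : Set ℕ := ⋃ t ∈ B, (↑t : Set ℕ)

/-- `B` is a block: nonempty finite sets, infinite base, and every infinite
subset of the base has a unique initial segment in `B`. -/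
def IsBlock (B : Set (Finset ℕ)) : Prop :=
  (∀ t ∈ B, t.Nonempty) ∧ (blockBase B).Infinite ∧
    ∀ X ∈ InfSub (blockBase B), ∃! s, s ∈ B ∧ IsInitSeg s X

/-- `B ≤̇ C` for blocks. -/
def LeDot (B C : Set (Finset ℕ)) : Prop :=
  blockBase B ⊆ blockBase C ∧ ∀ t ∈ B, ∃ s ∈ C, FinInitSeg s t

/-- `B <̇ C` for blocks. -/
def LtDot (B C : Set (Finset ℕ)) : Prop := LeDot B C ∧ ¬ B ⊆ C

/-- `E(C,B,n)`. -/
def Eset (C B : Set (Finset ℕ)) (n : ℕ) : Set (Finset ℕ) :=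
  {t | t ∈ B ∧ ↑t ⊆ Set.Iic n ∪ blockBase C ∧ ¬ (↑t : Set ℕ) ⊆ blockBase C}

/-- `M(C,B)`. -/
def Mset (C B : Set (Finset ℕ)) : Set ℕ :=
  {n | ∃ t ∈ B, (↑t : Set ℕ) ⊆ blockBase C ∧ t ∉ C ∧ n ∈ t ∧ ∀ x ∈ t, x ≤ n}

/-- `m(C,B)`. -/
noncomputable def mMin (C B : Set (Finset ℕ)) : ℕ := sInf (Mset C B)

/-- `s ◁ t` relative to the block `B`: some `X ∈ [∪B]^ω` has `s ⊏ X` and `t ⊏ X⁻`. -/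
def Tri (B : Set (Finset ℕ)) (s t : Finset ℕ) : Prop :=
  ∃ X ∈ InfSub (blockBase B), IsInitSeg s X ∧ IsInitSeg t (minus X)

/-- `f : B → Q` is `R`-bad (as an array on the block `B`). -/
def BadBlk {Q : Type*} (R : Q → Q → Prop) (B : Set (Finset ℕ)) (f : Finset ℕ → Q) : Prop :=
  ¬ ∃ s ∈ B, ∃ t ∈ B, Tri B s t ∧ R (f s) (f t)

/-- `f ≤̇' g` for arrays `f : B → Q` and `g : C → Q`. -/
def ArrLeDot {Q : Type*} (le' : Q → Q → Prop) (f : Finset ℕ → Q) (B : Set (Finset ℕ))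
    (g : Finset ℕ → Q) (C : Set (Finset ℕ)) : Prop :=
  LeDot B C ∧ (∀ t ∈ B ∩ C, f t = g t) ∧
    ∀ s ∈ C, ∀ t ∈ B, FinInitSeg s t → s ≠ t → le' (f t) (g s) ∧ f t ≠ g s

/-- `f <̇' g` for arrays on blocks. -/
def ArrLtDot {Q : Type*} (le' : Q → Q → Prop) (f : Finset ℕ → Q) (B : Set (Finset ℕ))
    (g : Finset ℕ → Q) (C : Set (Finset ℕ)) : Prop :=
  ArrLeDot le' f B g C ∧ ¬ B ⊆ C

/-- Pouzet's recursively defined relation is a well-founded strict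
partial order whose reflexive closure is contained in `R`. -/
theorem pouzet_recursion_wf {Q α : Type*} [LinearOrder α] [WellFoundedLT α]
    (R : Q → Q → Prop) (hR : ∀ q, R q q) (o : Q → α) (ho : Function.Bijective o)
    (ltQ : Q → Q → Prop)
    (hdef : ∀ p q, ltQ p q ↔ (o p < o q ∧ R p q ∧ ∀ r, ltQ r p → ltQ r q)) :
    WellFounded ltQ ∧ (∀ p, ¬ ltQ p p) ∧ (∀ p q r, ltQ p q → ltQ q r → ltQ p r) ∧
      (∀ p q, ltQ p q ∨ p = q → R p q) := by
  have hlt : ∀ p q, ltQ p q → o p < o q := fun p q h => ((hdef p q).1 h).1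
  refine ⟨?_, ?_, ?_, ?_⟩
  · exact Subrelation.wf (fun {p q} h => hlt p q h)
      (InvImage.wf o (wellFounded_lt))
  · intro p hp; exact lt_irrefl _ (hlt p p hp)
  · intro p q r hpq hqr; exact ((hdef q r).1 hqr).2.2 p hpq
  · rintro p q (h | rfl)
    · exact ((hdef p q).1 h).2.1
    · exact hR p
end

section
/- With <_Q defined by Pouzet's recursion from a partial ranking ≤' of a reflexive relation R via an order-preserving bijection o : Q → α (meaning p ≤' q implies o(p) ⪯ o(q)), the strict partial ranking <' is contained in <_Q: p <' q implies p <_Q q. -/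
/-- the strict partial ranking `<'` is contained in Pouzet's `<_Q`. -/
theorem pouzet_extends_ranking {Q α : Type*} [LinearOrder α] [WellFoundedLT α]
    (R : Q → Q → Prop) (hR : ∀ q, R q q) (le' : Q → Q → Prop)
    (hrefl : ∀ q, le' q q) (hanti : ∀ p q, le' p q → le' q p → p = q)
    (htrans : ∀ p q r, le' p q → le' q r → le' p r)
    (hwf : WellFounded (fun a b => le' a b ∧ a ≠ b))
    (hrank : ∀ p q r, R p q → le' q r → R p r)
    (o : Q → α) (ho : Function.Bijective o) (hmono : ∀ p q, le' p q → o p ≤ o q)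
    (ltQ : Q → Q → Prop)
    (hdef : ∀ p q, ltQ p q ↔ (o p < o q ∧ R p q ∧ ∀ r, ltQ r p → ltQ r q)) :
    ∀ p q, le' p q → p ≠ q → ltQ p q := by
  have owf : WellFounded (fun r s : Q => o r < o s) := InvImage.wf o wellFounded_lt
  have aux : ∀ r, ∀ p q, ltQ r p → le' p q → ltQ r q := by
    intro r
    induction r using owf.induction with
    | _ r IH =>
      intro p q hrp hpq
      rw [hdef] at hrp ⊢
      obtain ⟨h1, h2, h3⟩ := hrp
      refine ⟨lt_of_lt_of_le h1 (hmono _ _ hpq), hrank _ _ _ h2 hpq, ?_⟩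
      intro s hsr
      have hos : o s < o r := ((hdef s r).mp hsr).1
      exact IH s hos p q (h3 s hsr) hpq
  intro p q hpq hne
  rw [hdef]
  exact ⟨lt_of_le_of_ne (hmono _ _ hpq) (fun h => hne (ho.injective h)),
    hrank _ _ _ (hR p) hpq, fun r hr => aux r p q hr hpq⟩
end

section
/- Let C <̇ B be blocks and n ≤ m(C,B). Then D := C ∪ E(C,B,n) is a block satisfying C ≤̇ D <̇ B and m(C,B) = m(D,B). -/
lemma finInitSeg_refl (s : Finset ℕ) : FinInitSeg s s :=
  ⟨subset_rfl, fun x hx hx' _ _ => absurd hx hx'⟩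

lemma mem_blockBase {B : Set (Finset ℕ)} {t : Finset ℕ} (ht : t ∈ B) :
    (↑t : Set ℕ) ⊆ blockBase B := fun x hx => Set.mem_biUnion ht hx

lemma mem_blockBase_iff {B : Set (Finset ℕ)} {x : ℕ} :
    x ∈ blockBase B ↔ ∃ t ∈ B, x ∈ t := by
  simp [blockBase]

lemma blockBase_mono {B C : Set (Finset ℕ)} (h : B ⊆ C) : blockBase B ⊆ blockBase C := by
  intro x hx
  obtain ⟨t, ht, hxt⟩ := mem_blockBase_iff.1 hx
  exact mem_blockBase (h ht) hxt

lemma isInitSeg_trans {u s : Finset ℕ} {X : Set ℕ} (h1 : FinInitSeg u s) (h2 : IsInitSeg s X) :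
    IsInitSeg u X := by
  refine ⟨fun x hx => h2.1 (h1.1 hx), ?_⟩
  intro x hxX hxu y hyu
  by_cases hxs : x ∈ s
  · exact h1.2 x hxs hxu y hyu
  · exact h2.2 x hxX hxs y (h1.1 hyu)

lemma initSeg_comparable {s t : Finset ℕ} {X : Set ℕ} (hs : IsInitSeg s X) (ht : IsInitSeg t X) :
    FinInitSeg s t ∨ FinInitSeg t s := by
  have hsub : s ⊆ t ∨ t ⊆ s := by
    by_contra h
    push_neg at h
    obtain ⟨a, has, hat⟩ := Finset.not_subset.1 h.1
    obtain ⟨b, hbt, hbs⟩ := Finset.not_subset.1 h.2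
    have h1 := ht.2 a (hs.1 has) hat b hbt
    have h2 := hs.2 b (ht.1 hbt) hbs a has
    omega
  rcases hsub with h | h
  · exact Or.inl ⟨h, fun x hxt hxs y hys => hs.2 x (ht.1 hxt) hxs y hys⟩
  · exact Or.inr ⟨h, fun x hxs hxt y hyt => ht.2 x (hs.1 hxs) hxt y hyt⟩

/-- A block is an antichain under the initial-segment relation. -/
lemma block_antichain {A : Set (Finset ℕ)} (hA : IsBlock A) {s t : Finset ℕ}
    (hs : s ∈ A) (ht : t ∈ A) (h : FinInitSeg s t) : s = t := by
  set Y : Set ℕ := ↑t ∪ (blockBase A \ Set.Iic (t.sup id)) with hY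
  have hYsub : Y ⊆ blockBase A := by
    rintro x (hx | hx)
    · exact mem_blockBase ht hx
    · exact hx.1
  have hYinf : Y.Infinite := ((hA.2.1.diff (Set.finite_Iic _))).mono Set.subset_union_right
  have hbig : ∀ x ∈ Y, x ∉ t → ∀ y ∈ t, y < x := by
    rintro x (hx | hx) hxt y hyt
    · exact absurd hx hxt
    · have h1 : y ≤ t.sup id := Finset.le_sup (f := id) hyt
      have h2 : ¬ x ≤ t.sup id := hx.2
      omega
  have htY : IsInitSeg t Y := ⟨Set.subset_union_left, hbig⟩
  have hsY : IsInitSeg s Y := isInitSeg_trans h htY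
  obtain ⟨u, _, hu⟩ := hA.2.2 Y ⟨hYsub, hYinf⟩
  exact (hu s ⟨hs, hsY⟩).trans (hu t ⟨ht, htY⟩).symm

lemma Mset_nonempty {B C : Set (Finset ℕ)} (hB : IsBlock B) (hC : IsBlock C)
    (hlt : LtDot C B) : (Mset C B).Nonempty := by
  obtain ⟨u, huC, huB⟩ := Set.not_subset.1 hlt.2
  obtain ⟨s, hsB, hsu⟩ := hlt.1.2 u huC
  have hsne : s.Nonempty := hB.1 s hsB
  have hsC : s ∉ C := by
    intro hsC
    exact huB ((block_antichain hC hsC huC hsu) ▸ hsB)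
  refine ⟨s.max' hsne, s, hsB, ?_, hsC, s.max'_mem hsne, fun x hx => s.le_max' x hx⟩
  exact fun x hx => mem_blockBase huC (hsu.1 hx)

/-- for blocks `C <̇ B` and `n ≤ m(C,B)`, `D := C ∪ E(C,B,n)` is a
block with `C ≤̇ D <̇ B` and `m(C,B) = m(D,B)`. -/
theorem block_extension (B C : Set (Finset ℕ)) (hB : IsBlock B) (hC : IsBlock C)
    (hlt : LtDot C B) (n : ℕ) (hn : n ≤ mMin C B) :
    IsBlock (C ∪ Eset C B n) ∧ LeDot C (C ∪ Eset C B n) ∧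
      LtDot (C ∪ Eset C B n) B ∧ mMin C B = mMin (C ∪ Eset C B n) B := by
  set D := C ∪ Eset C B n with hD
  have hMne := Mset_nonempty hB hC hlt
  have hmMem : mMin C B ∈ Mset C B := Nat.sInf_mem hMne
  have hCB : blockBase C ⊆ blockBase B := hlt.1.1
  -- every element of D is contained in [0,n] ∪ base C
  have hDsubIic : ∀ t ∈ D, (↑t : Set ℕ) ⊆ Set.Iic n ∪ blockBase C := by
    rintro t (ht | ht)
    · exact fun x hx => Or.inr (mem_blockBase ht hx)
    · exact ht.2.1
  have hbaseD_Iic : blockBase D ⊆ Set.Iic n ∪ blockBase C := by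
    intro x hx
    obtain ⟨t, ht, hxt⟩ := mem_blockBase_iff.1 hx
    exact hDsubIic t ht hxt
  have hbaseD_B : blockBase D ⊆ blockBase B := by
    intro x hx
    obtain ⟨t, ht, hxt⟩ := mem_blockBase_iff.1 hx
    rcases ht with ht | ht
    · exact hCB (mem_blockBase ht hxt)
    · exact mem_blockBase ht.1 hxt
  have hbaseC_D : blockBase C ⊆ blockBase D := blockBase_mono Set.subset_union_left
  have hbaseD_inf : (blockBase D).Infinite := hC.2.1.mono hbaseC_D
  have hDne : ∀ t ∈ D, t.Nonempty := by
    rintro t (ht | ht)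
    · exact hC.1 t ht
    · exact hB.1 t ht.1
  -- key fact from minimality of m(C,B)
  have hkey : ∀ s ∈ B, (↑s : Set ℕ) ⊆ blockBase C → s ∉ C →
      ∀ h : s.Nonempty, mMin C B ≤ s.max' h := by
    intro s hsB hsub hsC h
    exact Nat.sInf_le ⟨s, hsB, hsub, hsC, s.max'_mem h, fun x hx => s.le_max' x hx⟩
  -- D is a block
  have hblockD : IsBlock D := by
    refine ⟨hDne, hbaseD_inf, ?_⟩
    intro X hX
    have hXB : X ∈ InfSub (blockBase B) := ⟨hX.1.trans hbaseD_B, hX.2⟩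
    obtain ⟨s, ⟨hsB, hsX⟩, hsuniq⟩ := hB.2.2 X hXB
    have hex : ∃ u, u ∈ D ∧ IsInitSeg u X := by
      by_cases hXC : X ⊆ blockBase C
      · obtain ⟨u, ⟨huC, huX⟩, _⟩ := hC.2.2 X ⟨hXC, hX.2⟩
        exact ⟨u, Or.inl huC, huX⟩
      · by_cases hsC : (↑s : Set ℕ) ⊆ blockBase C
        · obtain ⟨x, hxX, hxC⟩ := Set.not_subset.1 hXC
          have hxn : x ≤ n := by
            rcases hbaseD_Iic (hX.1 hxX) with h | h
            · exact h
            · exact absurd h hxC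
          have hsCmem : s ∈ C := by
            by_contra hsC'
            have hne : s.Nonempty := hB.1 s hsB
            have h1 := hkey s hsB hsC hsC' hne
            have hxs : x ∉ s := fun hmem => hxC (hsC hmem)
            have h2 := hsX.2 x hxX hxs (s.max' hne) (s.max'_mem hne)
            omega
          exact ⟨s, Or.inl hsCmem, hsX⟩
        · refine ⟨s, Or.inr ⟨hsB, ?_, hsC⟩, hsX⟩
          exact fun x hx => hbaseD_Iic (hX.1 (hsX.1 hx))
    obtain ⟨u, hu⟩ := hex
    refine ⟨u, hu, ?_⟩
    have hmix : ∀ a b : Finset ℕ, a ∈ C → b ∈ Eset C B n → IsInitSeg a X → IsInitSeg b X →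
        False := by
      intro a b haC hbE haX hbX
      obtain ⟨v, hvB, hva⟩ := hlt.1.2 a haC
      have hvX : IsInitSeg v X := isInitSeg_trans hva haX
      have hvb : v = b := (hsuniq v ⟨hvB, hvX⟩).trans (hsuniq b ⟨hbE.1, hbX⟩).symm
      apply hbE.2.2
      rw [← hvb]
      exact fun x hx => mem_blockBase haC (hva.1 hx)
    have huniq : ∀ a b : Finset ℕ, a ∈ D → b ∈ D → IsInitSeg a X → IsInitSeg b X → a = b := by
      rintro a b (haD | haD) (hbD | hbD) haX hbX
      · rcases initSeg_comparable haX hbX with h | h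
        · exact block_antichain hC haD hbD h
        · exact (block_antichain hC hbD haD h).symm
      · exact (hmix a b haD hbD haX hbX).elim
      · exact (hmix b a hbD haD hbX haX).elim
      · exact (hsuniq a ⟨haD.1, haX⟩).trans (hsuniq b ⟨hbD.1, hbX⟩).symm
    intro y hy
    exact huniq y u hy.1 hu.1 hy.2 hu.2
  refine ⟨hblockD, ⟨hbaseC_D, fun t ht => ⟨t, Or.inl ht, finInitSeg_refl t⟩⟩, ?_, ?_⟩
  · -- D <̇ B
    refine ⟨⟨hbaseD_B, ?_⟩, ?_⟩
    · rintro t (ht | ht)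
      · exact hlt.1.2 t ht
      · exact ⟨t, ht.1, finInitSeg_refl t⟩
    · intro h
      exact hlt.2 (fun t ht => h (Or.inl ht))
  · -- m(C,B) = m(D,B)
    have hmD : mMin C B ∈ Mset D B := by
      obtain ⟨t, htB, htsub, htC, htm, htbd⟩ := hmMem
      refine ⟨t, htB, htsub.trans hbaseC_D, ?_, htm, htbd⟩
      rintro (h | h)
      · exact htC h
      · exact h.2.2 htsub
    have hle : ∀ k ∈ Mset D B, mMin C B ≤ k := by
      rintro k ⟨t, htB, htsub, htD, hkt, hkbd⟩
      by_cases htC : (↑t : Set ℕ) ⊆ blockBase C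
      · exact Nat.sInf_le ⟨t, htB, htC, fun h => htD (Or.inl h), hkt, hkbd⟩
      · exact absurd (Or.inr ⟨htB, htsub.trans hbaseD_Iic, htC⟩ : t ∈ D) htD
    exact (le_antisymm (Nat.sInf_le hmD) (hle _ (Nat.sInf_mem ⟨_, hmD⟩))).symm
end

section
/- In the construction of Theorem 2 (mba-to-Pi12CA): the relation ≤' on Q (sequences σ with entries σ_i ∈ Q_i^*), defined by σ ≤' τ iff l(σ) = l(τ) and for each i < l(σ) either σ_i = τ_i, or σ_i ∈ Q_i and τ_i ∈ ω*, is a partial ranking of R. -/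
/-- The relation `R_n^*` on `Q_n^* = Q_n ⊕ ω*`. -/
def Rstar {Qn : ℕ → Type*} (Rn : ∀ n, Qn n → Qn n → Prop) (n : ℕ) :
    Qn n ⊕ ℕ → Qn n ⊕ ℕ → Prop
  | Sum.inl p, Sum.inl q => Rn n p q
  | Sum.inl _, Sum.inr _ => True
  | Sum.inr _, Sum.inl _ => False
  | Sum.inr m, Sum.inr k => k ≤ m

/-- The set `Q` of finite sequences `σ` with `σ_i ∈ Q_i^*`. -/
def SeqQ (Qn : ℕ → Type*) : Type _ := Σ l : ℕ, ∀ i : Fin l, Qn i ⊕ ℕ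

/-- The relation `R` on `SeqQ Qn`. -/
def RQ {Qn : ℕ → Type*} (Rn : ∀ n, Qn n → Qn n → Prop) (σ τ : SeqQ Qn) : Prop :=
  τ.1 ≤ σ.1 ∨ ∃ (i : ℕ) (h1 : i < σ.1) (h2 : σ.1 < τ.1),
    Rstar Rn i (σ.2 ⟨i, h1⟩) (τ.2 ⟨i, h1.trans h2⟩)

/-- The partial ranking `≤'` on `SeqQ Qn`. -/
def LePrimeQ {Qn : ℕ → Type*} (σ τ : SeqQ Qn) : Prop :=
  ∃ h : σ.1 = τ.1, ∀ i : Fin σ.1,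
    σ.2 i = τ.2 (Fin.cast h i) ∨
      ((σ.2 i).isLeft = true ∧ (τ.2 (Fin.cast h i)).isRight = true)

/-- `≤'` is a partial ranking of `R` on the set of sequences. -/
theorem lePrimeQ_partial_ranking {Qn : ℕ → Type*} (Rn : ∀ n, Qn n → Qn n → Prop)
    (hRn : ∀ n (q : Qn n), Rn n q q) :
    (∀ σ : SeqQ Qn, LePrimeQ σ σ) ∧
    (∀ σ τ : SeqQ Qn, LePrimeQ σ τ → LePrimeQ τ σ → σ = τ) ∧
    (∀ σ τ ρ : SeqQ Qn, LePrimeQ σ τ → LePrimeQ τ ρ → LePrimeQ σ ρ) ∧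
    WellFounded (fun σ τ : SeqQ Qn => LePrimeQ σ τ ∧ σ ≠ τ) ∧
    (∀ σ τ ρ : SeqQ Qn, RQ Rn σ τ → LePrimeQ τ ρ → RQ Rn σ ρ) := by
  refine ⟨?_, ?_, ?_, ?_, ?_⟩
  · intro σ; exact ⟨rfl, fun i => Or.inl rfl⟩
  · rintro ⟨l, f⟩ ⟨l', g⟩ ⟨h1, H1⟩ ⟨h2, H2⟩
    obtain rfl : l = l' := h1
    have H1' : ∀ i : Fin l, f i = g i ∨ ((f i).isLeft = true ∧ (g i).isRight = true) := H1
    have H2' : ∀ i : Fin l, g i = f i ∨ ((g i).isLeft = true ∧ (f i).isRight = true) := H2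
    have : f = g := by
      funext i
      rcases H1' i with e | ⟨hl, hr⟩
      · exact e
      · rcases H2' i with e | ⟨hl', hr'⟩
        · exact e.symm
        · obtain ⟨q, hq⟩ := Sum.isLeft_iff.mp hl
          rw [hq] at hr'; simp at hr'
    rw [this]
  · rintro ⟨l, f⟩ ⟨l', g⟩ ⟨l'', h⟩ ⟨h1, H1⟩ ⟨h2, H2⟩
    obtain rfl : l = l' := h1
    obtain rfl : l = l'' := h2
    have H1' : ∀ i : Fin l, f i = g i ∨ ((f i).isLeft = true ∧ (g i).isRight = true) := H1
    have H2' : ∀ i : Fin l, g i = h i ∨ ((g i).isLeft = true ∧ (h i).isRight = true) := H2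
    have key : ∀ i : Fin l, f i = h i ∨ ((f i).isLeft = true ∧ (h i).isRight = true) := by
      intro i
      rcases H1' i with e1 | ⟨hl1, hr1⟩
      · rcases H2' i with e2 | ⟨hl2, hr2⟩
        · exact Or.inl (e1.trans e2)
        · exact Or.inr ⟨e1 ▸ hl2, hr2⟩
      · rcases H2' i with e2 | ⟨hl2, hr2⟩
        · exact Or.inr ⟨hl1, e2 ▸ hr1⟩
        · obtain ⟨q, hq⟩ := Sum.isLeft_iff.mp hl2
          rw [hq] at hr1; simp at hr1
    exact ⟨rfl, key⟩
  · have key : ∀ σ τ : SeqQ Qn, LePrimeQ σ τ ∧ σ ≠ τ →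
        (Finset.univ.filter fun i : Fin σ.1 => (σ.2 i).isRight).card <
        (Finset.univ.filter fun i : Fin τ.1 => (τ.2 i).isRight).card := by
      rintro ⟨l, f⟩ ⟨l', g⟩ ⟨⟨h1, H1⟩, hne⟩
      obtain rfl : l = l' := h1
      have H1' : ∀ i : Fin l, f i = g i ∨ ((f i).isLeft = true ∧ (g i).isRight = true) := H1
      have hfg : f ≠ g := fun e => hne (by rw [show f = g from e])
      obtain ⟨i, hi⟩ := Function.ne_iff.mp hfg
      apply Finset.card_lt_card
      constructor
      · intro j hj
        simp only [Finset.mem_filter, Finset.mem_univ, true_and] at hj ⊢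
        rcases H1' j with e | ⟨hl, hr⟩
        · exact e ▸ hj
        · obtain ⟨q, hq⟩ := Sum.isLeft_iff.mp hl
          rw [hq] at hj; simp at hj
      · intro hsub
        rcases H1' i with e | ⟨hl, hr⟩
        · exact hi e
        · have h2 := hsub (by
            simp only [Finset.mem_filter, Finset.mem_univ, true_and]
            exact hr)
          simp only [Finset.mem_filter, Finset.mem_univ, true_and] at h2
          obtain ⟨q, hq⟩ := Sum.isLeft_iff.mp hl
          rw [hq] at h2; simp at h2
    exact Subrelation.wf (fun h => key _ _ h)
      (InvImage.wf (fun σ : SeqQ Qn => (Finset.univ.filter fun i : Fin σ.1 => (σ.2 i).isRight).card)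
        Nat.lt_wfRel.wf)
  · rintro ⟨l, f⟩ ⟨l', g⟩ ⟨l'', h⟩ hR ⟨he, H⟩
    obtain rfl : l' = l'' := he
    have H' : ∀ i : Fin l', g i = h i ∨ ((g i).isLeft = true ∧ (h i).isRight = true) := H
    rcases hR with hle | ⟨i, h1, h2, hstar⟩
    · exact Or.inl hle
    · refine Or.inr ⟨i, h1, h2, ?_⟩
      have h2' : l < l' := h2
      have hstar' : Rstar Rn i (f ⟨i, h1⟩) (g ⟨i, h1.trans h2'⟩) := hstar
      rcases H' ⟨i, h1.trans h2'⟩ with e | ⟨hl, hr⟩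
      · show Rstar Rn i (f ⟨i, h1⟩) (h ⟨i, h1.trans h2'⟩)
        rw [← e]; exact hstar'
      · obtain ⟨m, hm⟩ := Sum.isRight_iff.mp hr
        show Rstar Rn i (f ⟨i, h1⟩) (h ⟨i, h1.trans h2'⟩)
        rw [hm]
        obtain ⟨q, hq⟩ := Sum.isLeft_iff.mp hl
        rw [hq] at hstar'
        cases hf : f ⟨i, h1⟩ with
        | inl p => exact trivial
        | inr k => rw [hf] at hstar'; exact hstar'.elim
end

section
/- In the construction of Theorem 2: the relation R on finite sequences is not a better relation; explicitly, the map X ↦ ⟨f_0(X),...,f_n(X)⟩ with n = min(X) and f_i(X) = min(X) ∈ ω* is an R-bad continuous array on [ℕ]^ω. -/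
/-- The array `X ↦ ⟨f_0(X),…,f_n(X)⟩` with `n = min X` and `f_i(X) = min X ∈ ω*`. -/
noncomputable def badSeqArray (Qn : ℕ → Type*) (X : Set ℕ) : SeqQ Qn :=
  ⟨sInf X + 1, fun _ => Sum.inr (sInf X)⟩

/-- the explicit array is a continuous `R`-bad array on `[ℕ]^ω`,
so `R` is not a better relation on `SeqQ Qn`. -/
theorem RQ_not_better {Qn : ℕ → Type*} (Rn : ∀ n, Qn n → Qn n → Prop)
    (hRn : ∀ n (q : Qn n), Rn n q q) :
    ContOn Set.univ (badSeqArray Qn) ∧ BadOn (RQ Rn) Set.univ (badSeqArray Qn) ∧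
      ¬ ∀ (V : Set ℕ), V.Infinite → ∀ f : Set ℕ → SeqQ Qn,
          ContOn V f → ¬ BadOn (RQ Rn) V f := by
  have hcont : ContOn Set.univ (badSeqArray Qn) := by
    intro X hX
    have hne : X.Nonempty := hX.2.nonempty
    have hmem : sInf X ∈ X := Nat.sInf_mem hne
    refine ⟨{sInf X}, ⟨?_, ?_⟩, ?_⟩
    · intro x hx; simp at hx; simpa [hx] using hmem
    · intro x hx hxs y hy
      simp only [Finset.mem_singleton] at hy hxs
      subst hy
      exact lt_of_le_of_ne (Nat.sInf_le hx) (Ne.symm hxs)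
    · intro Y hY hsY
      have h1 : sInf X ∈ Y := hsY.1 (by simp)
      have h2 : sInf Y = sInf X := by
        refine le_antisymm (Nat.sInf_le h1) ?_
        have hY0 : sInf Y ∈ Y := Nat.sInf_mem ⟨_, h1⟩
        by_cases h : sInf Y ∈ ({sInf X} : Finset ℕ)
        · simp only [Finset.mem_singleton] at h; omega
        · have := hsY.2 _ hY0 h (sInf X) (by simp)
          omega
      unfold badSeqArray; rw [h2]
  have hbad : BadOn (RQ Rn) Set.univ (badSeqArray Qn) := by
    rintro ⟨X, ⟨-, hXinf⟩, hR⟩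
    have hmem : sInf X ∈ X := Nat.sInf_mem hXinf.nonempty
    have hminf : (minus X).Infinite := hXinf.diff (Set.finite_singleton _)
    have hm' : sInf (minus X) ∈ minus X := Nat.sInf_mem hminf.nonempty
    have hlt : sInf X < sInf (minus X) := by
      obtain ⟨hm1, hm2⟩ := hm'
      have := Nat.sInf_le hm1
      simp only [Set.mem_singleton_iff] at hm2
      omega
    rcases hR with h | ⟨i, h1, h2, h3⟩
    · simp only [badSeqArray] at h; omega
    · simp only [badSeqArray, Rstar] at h3
      omega
  exact ⟨hcont, hbad, fun h => h Set.univ Set.infinite_univ _ hcont hbad⟩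
end

section
/- In the proof of Theorem 4 (claim 1): for every n ∈ ℕ, |p⁻¹({n})| ≤ 2ⁿ, where p(i) = m(B_{i+1}, B_i) for a sequence of blocks with B_{i+1} <̇ B_i; more precisely, for i < j, the same finite set t ⊆ [0,n] with max t = n cannot witness both p(i) = n and p(j) = n, assuming B_j ≤̇ B_{i+1} and each B_{k+1} <̇ B_k. -/
/-- `t` witnesses `p(i) = n`, i.e. `m(B_{i+1}, B_i) = n` via `t`. -/
def WitnessM (B : ℕ → Set (Finset ℕ)) (t : Finset ℕ) (i n : ℕ) : Prop :=
  t ∈ B i ∧ (↑t : Set ℕ) ⊆ blockBase (B (i + 1)) ∧ t ∉ B (i + 1) ∧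
    n ∈ t ∧ (∀ x ∈ t, x ≤ n) ∧ mMin (B (i + 1)) (B i) = n

/-- Extend a finite subset of an infinite set to an infinite set having it as
initial segment. -/
lemma my_exists_ext (t : Finset ℕ) (V : Set ℕ) (ht : ↑t ⊆ V) (hV : V.Infinite) :
    ∃ X ∈ InfSub V, IsInitSeg t X := by
  classical
  set X : Set ℕ := ↑t ∪ {x ∈ V | ∀ y ∈ t, y < x} with hXdef
  have hXV : X ⊆ V := by
    rintro x (hx | hx)
    exacts [ht hx, hx.1]
  have hinf : X.Infinite := by
    have hsub : V \ Set.Iic (t.sup id) ⊆ {x ∈ V | ∀ y ∈ t, y < x} := by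
      rintro x ⟨hxV, hx⟩
      refine ⟨hxV, fun y hy => ?_⟩
      have h1 : y ≤ t.sup id := Finset.le_sup (f := id) hy
      have h2 : ¬ x ≤ t.sup id := hx
      omega
    have : {x ∈ V | ∀ y ∈ t, y < x}.Infinite :=
      ((hV.diff (Set.finite_Iic _)).mono hsub)
    exact this.mono Set.subset_union_right
  refine ⟨X, ⟨hXV, hinf⟩, Set.subset_union_left, ?_⟩
  rintro x (hx | hx) hxt y hy
  · exact absurd hx hxt
  · exact hx.2 y hy

lemma my_initseg_trans {s t : Finset ℕ} {X : Set ℕ}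
    (hst : FinInitSeg s t) (htX : IsInitSeg t X) : IsInitSeg s X := by
  obtain ⟨hsub, hs⟩ := hst
  obtain ⟨hsub', ht⟩ := htX
  refine ⟨fun x hx => hsub' (hsub hx), fun x hx hxs y hy => ?_⟩
  by_cases hxt : x ∈ t
  · exact hs x hxt hxs y hy
  · exact ht x hx hxt y (hsub hy)

lemma my_mem_base {B : Set (Finset ℕ)} {t : Finset ℕ} (ht : t ∈ B) :
    ↑t ⊆ blockBase B := fun x hx => Set.mem_biUnion ht hx

/-- `M(C,B)` is nonempty when `C <̇ B`. -/
lemma my_mset_nonempty {C B : Set (Finset ℕ)} (hBb : IsBlock B) (hCb : IsBlock C)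
    (h : LtDot C B) : (Mset C B).Nonempty := by
  obtain ⟨⟨hbase, _⟩, hns⟩ := h
  rw [Set.not_subset] at hns
  obtain ⟨u, huC, huB⟩ := hns
  obtain ⟨X, hXC, huX⟩ := my_exists_ext u (blockBase C) (my_mem_base huC) hCb.2.1
  have hXB : X ∈ InfSub (blockBase B) := ⟨hXC.1.trans hbase, hXC.2⟩
  obtain ⟨s, ⟨hsB, hsX⟩, huniq⟩ := hBb.2.2 X hXB
  have hsC : s ∉ C := by
    intro hsC
    obtain ⟨r, hr, hruniq⟩ := hCb.2.2 X hXC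
    have h1 : s = r := hruniq s ⟨hsC, hsX⟩
    have h2 : u = r := hruniq u ⟨huC, huX⟩
    rw [h1, ← h2] at hsB
    exact huB hsB
  have hsne : s.Nonempty := hBb.1 s hsB
  exact ⟨s.max' hsne, s, hsB, fun x hx => hXC.1 (hsX.1 hx), hsC,
    s.max'_mem hsne, fun x hx => Finset.le_max' s x hx⟩

/-- `|p⁻¹({n})| ≤ 2ⁿ`; no `t` witnesses both `p(i) = n` and
`p(j) = n` for `i < j`. -/
theorem witness_unique (B : ℕ → Set (Finset ℕ)) (hB : ∀ i, IsBlock (B i))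
    (hlt : ∀ i, LtDot (B (i + 1)) (B i)) (hle : ∀ i j, i ≤ j → LeDot (B j) (B i)) :
    (∀ n, {i | mMin (B (i + 1)) (B i) = n}.ncard ≤ 2 ^ n) ∧
    (∀ (t : Finset ℕ) (i j n : ℕ), i < j →
      WitnessM B t i n → WitnessM B t j n → False) := by
  classical
  have key : ∀ (t : Finset ℕ) (i j n : ℕ), i < j →
      WitnessM B t i n → WitnessM B t j n → False := by
    intro t i j n hij hi hj
    obtain ⟨htBi, htbase, htni, -, -, -⟩ := hi
    obtain ⟨htBj, -, -, -, -, -⟩ := hj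
    obtain ⟨X, hXj, htX⟩ := my_exists_ext t (blockBase (B j)) (my_mem_base htBj) (hB j).2.1
    have hbase_ji1 : blockBase (B j) ⊆ blockBase (B (i + 1)) := (hle (i + 1) j hij).1
    have hbase_i : blockBase (B (i + 1)) ⊆ blockBase (B i) := (hlt i).1.1
    have hXi : X ∈ InfSub (blockBase (B i)) :=
      ⟨(hXj.1.trans hbase_ji1).trans hbase_i, hXj.2⟩
    obtain ⟨s, hsBi1, hst⟩ := (hle (i + 1) j hij).2 t htBj
    have hsX : IsInitSeg s X := my_initseg_trans hst htX
    obtain ⟨r, hrBi, hrs⟩ := (hlt i).1.2 s hsBi1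
    have hrX : IsInitSeg r X := my_initseg_trans hrs hsX
    obtain ⟨w, -, hwuniq⟩ := (hB i).2.2 X hXi
    have h1 : r = w := hwuniq r ⟨hrBi, hrX⟩
    have h2 : t = w := hwuniq t ⟨htBi, htX⟩
    have hts : s = t := by
      refine Finset.Subset.antisymm hst.1 ?_
      have : r = t := h1.trans h2.symm
      rw [← this]
      exact hrs.1
    rw [← hts] at htni
    exact htni hsBi1
  refine ⟨?_, key⟩
  intro n
  have hwit : ∀ i, ∃ t, mMin (B (i + 1)) (B i) = n → WitnessM B t i n := by
    intro i
    by_cases hi : mMin (B (i + 1)) (B i) = n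
    · have hne := my_mset_nonempty (hB i) (hB (i + 1)) (hlt i)
      have hmem : mMin (B (i + 1)) (B i) ∈ Mset (B (i + 1)) (B i) := Nat.sInf_mem hne
      rw [hi] at hmem
      obtain ⟨t, htB, htsub, htnin, hnt, hbound⟩ := hmem
      exact ⟨t, fun _ => ⟨htB, htsub, htnin, hnt, hbound, hi⟩⟩
    · exact ⟨∅, fun h => absurd h hi⟩
  choose g hg using hwit
  have hcard := Set.ncard_le_ncard_of_injOn (s := {i | mMin (B (i + 1)) (B i) = n})
      (t := (↑(Finset.range n).powerset : Set (Finset ℕ))) (fun i => (g i).erase n)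
      (fun i hi => by
        obtain ⟨-, -, -, hnt, hbound, -⟩ := hg i hi
        simp only [Finset.coe_powerset, Set.mem_preimage, Set.mem_powerset_iff,
          Finset.coe_subset, Finset.mem_coe]
        intro x hx
        have hxt := Finset.mem_of_mem_erase hx
        have hxn := Finset.ne_of_mem_erase hx
        have := hbound x hxt
        exact Finset.mem_range.2 (lt_of_le_of_ne this hxn))
      (fun i hi j hj hij => by
        obtain ⟨hiB, -, -, hni, -, -⟩ := hg i hi
        obtain ⟨hjB, -, -, hnj, -, -⟩ := hg j hj
        have hgij : g i = g j := by
          have h1 : insert n ((g i).erase n) = g i := Finset.insert_erase hni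
          have h2 : insert n ((g j).erase n) = g j := Finset.insert_erase hnj
          rw [← h1, ← h2]
          exact congrArg (insert n) hij
        by_contra hne
        rcases Nat.lt_or_ge i j with h | h
        · exact key (g i) i j n h (hg i hi) (hgij ▸ hg j hj)
        · have hlt' : j < i := lt_of_le_of_ne h (Ne.symm hne)
          exact key (g i) j i n hlt' (hgij ▸ hg j hj) (hg i hi))
      ((Finset.range n).powerset.finite_toSet)
  calc ({i | mMin (B (i + 1)) (B i) = n}).ncard
      ≤ (↑(Finset.range n).powerset : Set (Finset ℕ)).ncard := hcard
    _ = 2 ^ n := by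
        rw [Set.ncard_coe_finset, Finset.card_powerset, Finset.card_range]
end

section
/- Stabilization along a descending sequence of arrays: let f_i : B_i → Q be arrays on blocks with f_{i+1} <̇' f_i for a well-founded partial order ≤' on Q. If X is an infinite subset of ∩_i ∪B_i and s_i ∈ B_i denotes the initial segment of X in B_i, then there is an i such that s_j = s_i and f_j(s_j) = f_i(s_i) for all j ≥ i. -/
/-- stabilization along a `<̇'`-descending sequence of arrays. -/
theorem arrays_stabilize {Q : Type*} (le' : Q → Q → Prop)
    (hrefl : ∀ q, le' q q) (hanti : ∀ p q, le' p q → le' q p → p = q)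
    (htrans : ∀ p q r, le' p q → le' q r → le' p r)
    (hwf : WellFounded (fun a b => le' a b ∧ a ≠ b))
    (B : ℕ → Set (Finset ℕ)) (f : ℕ → Finset ℕ → Q) (hB : ∀ i, IsBlock (B i))
    (hlt : ∀ i, ArrLtDot le' (f (i + 1)) (B (i + 1)) (f i) (B i))
    (X : Set ℕ) (hX : X.Infinite) (hXsub : ∀ i, X ⊆ blockBase (B i))
    (s : ℕ → Finset ℕ) (hs : ∀ i, s i ∈ B i ∧ IsInitSeg (s i) X) :
    ∃ i, ∀ j, i ≤ j → s j = s i ∧ f j (s j) = f i (s i) := by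
  classical
  have hstep : ∀ i, (s (i+1) = s i ∧ f (i+1) (s (i+1)) = f i (s i)) ∨
      (le' (f (i+1) (s (i+1))) (f i (s i)) ∧ f (i+1) (s (i+1)) ≠ f i (s i)) := by
    intro i
    obtain ⟨⟨hle, heq, hlt'⟩, _⟩ := hlt i
    obtain ⟨u, hu, hfin⟩ := hle.2 (s (i+1)) (hs (i+1)).1
    have huX : IsInitSeg u X := by
      obtain ⟨hsub, hmin⟩ := hfin
      obtain ⟨hsub', hmin'⟩ := (hs (i+1)).2
      refine ⟨fun x hx => hsub' (hsub hx), fun x hx hxu y hy => ?_⟩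
      by_cases hxt : x ∈ s (i+1)
      · exact hmin x hxt hxu y hy
      · exact hmin' x hx hxt y (hsub hy)
    have hXin : X ∈ InfSub (blockBase (B i)) := ⟨hXsub i, hX⟩
    obtain ⟨w, hw, huniq⟩ := (hB i).2.2 X hXin
    have hu_eq : u = s i := by
      rw [huniq u ⟨hu, huX⟩, huniq (s i) ⟨(hs i).1, (hs i).2⟩]
    rw [hu_eq] at hfin
    by_cases hcase : s i = s (i+1)
    · left
      have hmem : s (i+1) ∈ B (i+1) ∩ B i :=
        ⟨(hs (i+1)).1, by rw [← hcase]; exact (hs i).1⟩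
      refine ⟨hcase.symm, ?_⟩
      rw [heq (s (i+1)) hmem, ← hcase]
    · exact Or.inr (hlt' (s i) (hs i).1 (s (i+1)) (hs (i+1)).1 hfin hcase)
  have main : ∀ a : Q, ∀ i, f i (s i) = a →
      ∃ N, ∀ j, N ≤ j → s j = s N ∧ f j (s j) = f N (s N) := by
    intro a
    induction a using hwf.induction with
    | _ a IH =>
      intro i hqi
      by_cases hall : ∃ k, i ≤ k ∧ le' (f (k+1) (s (k+1))) (f k (s k)) ∧
          f (k+1) (s (k+1)) ≠ f k (s k)
      · obtain ⟨k, hk⟩ := hall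
        have hP : ∃ k, i ≤ k ∧ le' (f (k+1) (s (k+1))) (f k (s k)) ∧
            f (k+1) (s (k+1)) ≠ f k (s k) := ⟨k, hk⟩
        set k0 := Nat.find hP with hk0
        obtain ⟨hik0, hstrict⟩ := Nat.find_spec hP
        have heqk : ∀ m, i ≤ m → m ≤ k0 → f m (s m) = a := by
          intro m him
          induction m, him using Nat.le_induction with
          | base => intro _; exact hqi
          | succ n hn ihn =>
            intro hnk
            have hnlt : n < k0 := Nat.lt_of_succ_le hnk
            have hne : ¬ (i ≤ n ∧ le' (f (n+1) (s (n+1))) (f n (s n)) ∧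
                f (n+1) (s (n+1)) ≠ f n (s n)) := Nat.find_min hP hnlt
            rcases hstep n with h | h
            · rw [h.2]; exact ihn (le_of_lt hnlt)
            · exact absurd ⟨hn, h⟩ hne
        have hk0a : f k0 (s k0) = a := heqk k0 hik0 le_rfl
        have hrel : le' (f (k0+1) (s (k0+1))) a ∧ f (k0+1) (s (k0+1)) ≠ a := by
          rw [← hk0a]; exact hstrict
        exact IH (f (k0+1) (s (k0+1))) hrel (k0+1) rfl
      · refine ⟨i, fun j hj => ?_⟩
        induction j, hj using Nat.le_induction with
        | base => exact ⟨rfl, rfl⟩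
        | succ n hn ihn =>
          rcases hstep n with h | h
          · exact ⟨h.1.trans ihn.1, h.2.trans ihn.2⟩
          · exact absurd ⟨n, hn, h⟩ hall
  exact main (f 0 (s 0)) 0 rfl
end
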